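/- Assume λ₁ < λ₂ < … < λ_d and λ > λ₁/2. Then there exists ᾱ > 0 such that for every step size α ∈ (0, ᾱ), the set of initial points q⁰ ∈ ℝᵈ for which the gradient descent sequence q^{k+1} = q^k − α∇ℓ(q^k) converges to a critical point of ℓ other than √(1 − λ₁/(2λ)) e₁ or −√(1 − λ₁/(2λ)) e₁ has Lebesgue measure zero. In other words, for a randomly initialized q⁰ (drawn from any probability distribution absolutely continuous with respect to Lebesgue measure), with probability one gradient descent avoids the bad critical points of ℓ, i.e. the strict saddle points and local maxima. -/

import Mathlib

/-!
Write `c(q) = 2λ₁ + 4λ(‖q‖² - 1)` and `F(q) = q - α∇ℓ(q)`. Since `∇ℓ(q)ᵢ = (2λᵢ + 4λ(‖q‖² - 1)) qᵢ`,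
gradient descent multiplies the first coordinate by `1 - α c(qᵏ)` at each step. At a critical
point `p` other than the two minima, `p₁ = 0` and `c(p) < 0` (the eigenvalues are simple), so near
`p` this factor exceeds `1`: the first coordinate of `qᵏ → p` can only tend to `0` if it vanishes
at some finite time, that is, if `q⁰₁ = 0` or `1 - α c(Fᵏ(q⁰)) = 0` for some `k`. Each of these
countably many conditions is the zero set of a real-analytic function of `q⁰` that does not vanish
identically, hence Lebesgue-null. In particular every step size `α > 0` works.
-/

open Filter Topology MeasureTheory Set

section AnalyticZeros

variable {F : Type*} [NormedAddCommGroup F] [NormedSpace ℝ F]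

theorem AnalyticOnNhd.volume_setOf_eq_zero_of_real {f : ℝ → F} (hf : AnalyticOnNhd ℝ f univ)
    {a : ℝ} (ha : f a ≠ 0) : volume {x | f x = 0} = 0 := by
  have hne : ∀ᶠ x in codiscreteWithin univ, f x ≠ 0 :=
    (hf.eqOn_zero_or_eventually_ne_zero_of_preconnected isPreconnected_univ).resolve_left
      fun h ↦ ha (h (mem_univ a))
  have hae := ae_restrict_le_codiscreteWithin (μ := volume) MeasurableSet.univ hne
  rw [Measure.restrict_univ] at hae
  exact measure_eq_zero_iff_ae_notMem.mpr hae

theorem analyticAt_fin_cons {n : ℕ} (p : ℝ × (Fin n → ℝ)) :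
    AnalyticAt ℝ (fun p : ℝ × (Fin n → ℝ) ↦ (Fin.cons p.1 p.2 : Fin (n + 1) → ℝ)) p := by
  rw [analyticAt_pi_iff]
  intro i
  cases i using Fin.cases with
  | zero => exact analyticAt_fst
  | succ j => exact (ContinuousLinearMap.proj j ∘L ContinuousLinearMap.snd ℝ ℝ _).analyticAt p

theorem AnalyticOnNhd.volume_setOf_eq_zero_of_pi {n : ℕ} {f : (Fin n → ℝ) → F}
    (hf : AnalyticOnNhd ℝ f univ) {a : Fin n → ℝ} (ha : f a ≠ 0) :
    volume {x | f x = 0} = 0 := by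
  induction n with
  | zero =>
    have : {x : Fin 0 → ℝ | f x = 0} = ∅ :=
      eq_empty_of_forall_notMem fun x hx ↦ ha (Subsingleton.elim x a ▸ hx)
    rw [this, measure_empty]
  | succ n ih =>
    let g : ℝ × (Fin n → ℝ) → F := fun p ↦ f (Fin.cons p.1 p.2)
    have hg : AnalyticOnNhd ℝ g univ := fun p _ ↦ (hf _ (mem_univ _)).comp (analyticAt_fin_cons p)
    have hcons := (volume_preserving_piFinSuccAbove (fun _ : Fin (n + 1) ↦ ℝ) 0).symm
    have hzeros : MeasurableSet {x : Fin (n + 1) → ℝ | f x = 0} :=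
      (isClosed_eq hf.continuous continuous_const).measurableSet
    have hpre : (MeasurableEquiv.piFinSuccAbove (fun _ ↦ ℝ) 0).symm ⁻¹' {x | f x = 0} =
        {p | g p = 0} := by
      ext p
      simp [g, MeasurableEquiv.piFinSuccAbove_symm_apply, Fin.insertNthEquiv, Fin.insertNth_zero']
    rw [← hcons.measure_preimage hzeros.nullMeasurableSet, hpre, Measure.volume_eq_prod,
      Measure.measure_prod_null (isClosed_eq hg.continuous continuous_const).measurableSet]
    have hfirst : volume {t : ℝ | g (t, Fin.tail a) = 0} = 0 :=
      AnalyticOnNhd.volume_setOf_eq_zero_of_real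
        (fun t _ ↦ (hg _ (mem_univ _)).comp (analyticAt_id.prod analyticAt_const))
        (a := a 0) (by simpa [g] using ha)
    filter_upwards [measure_eq_zero_iff_ae_notMem.mp hfirst] with t ht
    exact ih (fun y _ ↦ (hg _ (mem_univ _)).comp (analyticAt_const.prod analyticAt_id)) ht

theorem AnalyticOnNhd.addHaar_setOf_eq_zero {E : Type*} [NormedAddCommGroup E]
    [NormedSpace ℝ E] [FiniteDimensional ℝ E] [MeasurableSpace E] [BorelSpace E]
    (μ : Measure E) [μ.IsAddHaarMeasure] {f : E → F} (hf : AnalyticOnNhd ℝ f univ) {a : E}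
    (ha : f a ≠ 0) : μ {x | f x = 0} = 0 := by
  let L : (Fin (Module.finrank ℝ E) → ℝ) ≃L[ℝ] E := ContinuousLinearEquiv.ofFinrankEq (by simp)
  have hzeros : MeasurableSet {x | f x = 0} :=
    (isClosed_eq hf.continuous continuous_const).measurableSet
  refine Measure.absolutelyContinuous_isAddHaarMeasure μ (volume.map L) ?_
  rw [Measure.map_apply L.continuous.measurable hzeros]
  exact AnalyticOnNhd.volume_setOf_eq_zero_of_pi
    (fun y _ ↦ (hf _ (mem_univ _)).comp ((L : (Fin _ → ℝ) →L[ℝ] E).analyticAt y))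
    (a := L.symm a) (by simpa using ha)

end AnalyticZeros

theorem AnalyticOnNhd.iterate {E : Type*} [NormedAddCommGroup E] [NormedSpace ℝ E] {f : E → E}
    (hf : AnalyticOnNhd ℝ f univ) (n : ℕ) : AnalyticOnNhd ℝ f^[n] univ := by
  induction n with
  | zero => exact analyticOnNhd_id
  | succ n ih =>
    rw [Function.iterate_succ']
    exact hf.comp ih (mapsTo_univ _ _)

theorem analyticAt_norm_sq {E : Type*} [NormedAddCommGroup E] [InnerProductSpace ℝ E] (x : E) :
    AnalyticAt ℝ (fun x : E ↦ ‖x‖ ^ 2) x := by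
  have hdiag : AnalyticAt ℝ (fun y : E ↦ (y, y)) x := analyticAt_id.prod analyticAt_id
  have hinner := ((innerSL ℝ : E →L[ℝ] E →L[ℝ] ℝ).analyticAt_bilinear (x, x)).comp
    (f := fun y : E ↦ (y, y)) hdiag
  exact hinner.congr (Eventually.of_forall fun y ↦ real_inner_self_eq_norm_sq y)

theorem eq_zero_or_exists_eq_zero_of_tendsto_zero {u c : ℕ → ℝ}
    (hu : ∀ k, u (k + 1) = c k * u k) (hc : ∀ᶠ k in atTop, 1 ≤ |c k|)
    (hlim : Tendsto u atTop (𝓝 0)) : u 0 = 0 ∨ ∃ k, c k = 0 := by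
  by_contra! h
  obtain ⟨hu0, hc0⟩ := h
  have hne : ∀ k, u k ≠ 0 := fun k ↦ by
    induction k with
    | zero => exact hu0
    | succ k ih => rw [hu]; exact mul_ne_zero (hc0 k) ih
  obtain ⟨K, hK⟩ := eventually_atTop.1 hc
  have hmono : ∀ k ≥ K, |u K| ≤ |u k| := fun k hk ↦ by
    induction k, hk using Nat.le_induction with
    | base => exact le_rfl
    | succ k hk ih =>
      rw [hu, abs_mul]
      exact ih.trans (le_mul_of_one_le_left (abs_nonneg _) (hK k hk))
  have hK0 : |u K| ≤ 0 :=
    ge_of_tendsto (by simpa using hlim.abs) (eventually_atTop.2 ⟨K, hmono⟩)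
  exact hne K (abs_nonpos_iff.1 hK0)

section Loss

variable {ι : Type*} [Fintype ι] (Λ : ι → ℝ) (lam : ℝ)

noncomputable def loss (q : EuclideanSpace ℝ ι) : ℝ :=
  ∑ i, Λ i * q i ^ 2 + lam * (‖q‖ ^ 2 - 1) ^ 2

noncomputable def gradCoeff (i : ι) (q : EuclideanSpace ℝ ι) : ℝ :=
  2 * Λ i + 4 * lam * (‖q‖ ^ 2 - 1)

noncomputable def gdStep (α : ℝ) (q : EuclideanSpace ℝ ι) : EuclideanSpace ℝ ι :=
  WithLp.toLp 2 fun i ↦ (1 - α * gradCoeff Λ lam i q) * q i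

theorem gradCoeff_sub_gradCoeff (i j : ι) (q : EuclideanSpace ℝ ι) :
    gradCoeff Λ lam i q - gradCoeff Λ lam j q = 2 * (Λ i - Λ j) := by
  simp only [gradCoeff]
  ring

theorem hasGradientAt_loss (q : EuclideanSpace ℝ ι) :
    HasGradientAt (loss Λ lam) (WithLp.toLp 2 fun i ↦ gradCoeff Λ lam i q * q i) q := by
  have hquad : HasFDerivAt (fun q : EuclideanSpace ℝ ι ↦ ∑ i, Λ i * q i ^ 2)
      (∑ i, Λ i • (2 * q i) • EuclideanSpace.proj i) q :=
    HasFDerivAt.fun_sum fun i _ ↦ by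
      simpa using
        ((EuclideanSpace.proj i : EuclideanSpace ℝ ι →L[ℝ] ℝ).hasFDerivAt.pow 2).const_mul (Λ i)
  have hnorm := ((hasStrictFDerivAt_norm_sq q).hasFDerivAt.sub_const 1).pow 2 |>.const_mul lam
  rw [hasGradientAt_iff_hasFDerivAt]
  refine (hquad.add hnorm).congr_fderiv ?_
  ext v
  simp only [Nat.add_one_sub_one, pow_one, nsmul_eq_mul, Nat.cast_ofNat, add_apply, sum_apply,
    smul_apply, PiLp.proj_apply, smul_eq_mul, coe_innerSL_apply, PiLp.inner_apply,
    RCLike.inner_apply, Real.ringHom_apply, Finset.mul_sum, gradCoeff,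
    InnerProductSpace.toDual_apply_apply]
  rw [← Finset.sum_add_distrib]
  exact Finset.sum_congr rfl fun i _ ↦ by ring

theorem gradient_loss_eq_zero_iff {p : EuclideanSpace ℝ ι} :
    gradient (loss Λ lam) p = 0 ↔ ∀ i, gradCoeff Λ lam i p * p i = 0 := by
  rw [(hasGradientAt_loss Λ lam p).gradient, WithLp.toLp_eq_zero, funext_iff]
  rfl

theorem sub_smul_gradient_loss (α : ℝ) (q : EuclideanSpace ℝ ι) :
    q - α • gradient (loss Λ lam) q = gdStep Λ lam α q := by
  rw [(hasGradientAt_loss Λ lam q).gradient]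
  ext i
  simp only [gdStep, PiLp.sub_apply, PiLp.smul_apply, smul_eq_mul]
  ring

theorem analyticOnNhd_gradCoeff (i : ι) : AnalyticOnNhd ℝ (gradCoeff Λ lam i) univ := by
  intro q _
  have hnorm := analyticAt_norm_sq q
  unfold gradCoeff
  fun_prop

theorem analyticOnNhd_gdStep (α : ℝ) : AnalyticOnNhd ℝ (gdStep Λ lam α) univ := by
  intro q _
  refine ((PiLp.continuousLinearEquiv 2 ℝ fun _ : ι ↦ ℝ).symm.analyticAt _).comp ?_
  rw [analyticAt_pi_iff]
  intro i
  have hproj : AnalyticAt ℝ (fun q : EuclideanSpace ℝ ι ↦ q i) q :=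
    (EuclideanSpace.proj i : EuclideanSpace ℝ ι →L[ℝ] ℝ).analyticAt q
  have hcoeff := analyticOnNhd_gradCoeff Λ lam i q trivial
  exact (analyticAt_const.sub (analyticAt_const.mul hcoeff)).mul hproj

theorem gdStep_iterate_zero (α : ℝ) (k : ℕ) : (gdStep Λ lam α)^[k] 0 = 0 :=
  Function.iterate_fixed (by ext i; simp [gdStep]) k

end Loss

section GradientDescent

variable {ι : Type*} [Fintype ι] {Λ : ι → ℝ} {lam : ℝ} {i₀ : ι}

theorem eq_smul_single_of_critical [DecidableEq ι] (hmin : ∀ i ≠ i₀, Λ i₀ < Λ i)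
    {p : EuclideanSpace ℝ ι} (hp : ∀ i, gradCoeff Λ lam i p * p i = 0) (h₀ : p i₀ ≠ 0) :
    p = p i₀ • EuclideanSpace.single i₀ 1 := by
  have hc₀ : gradCoeff Λ lam i₀ p = 0 := (mul_eq_zero.1 (hp i₀)).resolve_right h₀
  ext i
  by_cases hi : i = i₀
  · simp [hi]
  · have hci : 0 < gradCoeff Λ lam i p := by
      linarith [gradCoeff_sub_gradCoeff Λ lam i i₀ p, hmin i hi]
    simp [hi, (mul_eq_zero.1 (hp i)).resolve_left hci.ne']

theorem critical_coord_eq_zero [DecidableEq ι] (hmin : ∀ i ≠ i₀, Λ i₀ < Λ i)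
    (hlam : Λ i₀ < 2 * lam) {p : EuclideanSpace ℝ ι} (hp : ∀ i, gradCoeff Λ lam i p * p i = 0)
    (hne : p ≠ √(1 - Λ i₀ / (2 * lam)) • EuclideanSpace.single i₀ 1)
    (hne' : p ≠ -(√(1 - Λ i₀ / (2 * lam)) • EuclideanSpace.single i₀ 1)) :
    p i₀ = 0 := by
  by_contra h₀
  have hp_eq := eq_smul_single_of_critical hmin hp h₀
  have hc₀ : 2 * Λ i₀ + 4 * lam * (p i₀ ^ 2 - 1) = 0 := by
    have hnorm : ‖p‖ = |p i₀| := by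
      conv_lhs => rw [hp_eq]
      simp [norm_smul]
    simpa [gradCoeff, hnorm, sq_abs, h₀] using hp i₀
  have hlam₀ : lam ≠ 0 := by
    rintro rfl
    linarith
  have hsq : p i₀ ^ 2 = 1 - Λ i₀ / (2 * lam) := by
    field_simp
    linarith
  have hsqrt : √(1 - Λ i₀ / (2 * lam)) ^ 2 = p i₀ ^ 2 := by
    rw [Real.sq_sqrt (hsq ▸ sq_nonneg _), hsq]
  rcases sq_eq_sq_iff_eq_or_eq_neg.1 hsqrt with h | h
  · exact hne (hp_eq.trans (by rw [h]))
  · exact hne' (hp_eq.trans (by rw [h, neg_smul, neg_neg]))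

theorem gradCoeff_neg_of_critical (hmin : ∀ i ≠ i₀, Λ i₀ < Λ i) (hlam : Λ i₀ < 2 * lam)
    {p : EuclideanSpace ℝ ι} (hp : ∀ i, gradCoeff Λ lam i p * p i = 0) (h₀ : p i₀ = 0) :
    gradCoeff Λ lam i₀ p < 0 := by
  by_cases hzero : p = 0
  · simp only [hzero, gradCoeff, norm_zero]
    linarith
  · obtain ⟨i, hi⟩ : ∃ i, p i ≠ 0 := by
      by_contra! h
      exact hzero (PiLp.ext h)
    have hii₀ : i ≠ i₀ := by rintro rfl; exact hi h₀
    have hci : gradCoeff Λ lam i p = 0 := (mul_eq_zero.1 (hp i)).resolve_right hi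
    linarith [gradCoeff_sub_gradCoeff Λ lam i i₀ p, hmin i hii₀]

theorem coord_eq_zero_or_exists_of_tendsto {α : ℝ} (hα : 0 < α) {q p : EuclideanSpace ℝ ι}
    (h₀ : p i₀ = 0) (hneg : gradCoeff Λ lam i₀ p < 0)
    (hlim : Tendsto (fun k ↦ (gdStep Λ lam α)^[k] q) atTop (𝓝 p)) :
    q i₀ = 0 ∨ ∃ k, 1 - α * gradCoeff Λ lam i₀ ((gdStep Λ lam α)^[k] q) = 0 := by
  have hfactor : Tendsto (fun k ↦ 1 - α * gradCoeff Λ lam i₀ ((gdStep Λ lam α)^[k] q)) atTop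
      (𝓝 (1 - α * gradCoeff Λ lam i₀ p)) :=
    ((analyticOnNhd_gradCoeff Λ lam i₀).continuous.tendsto p |>.comp hlim).const_mul α
      |>.const_sub 1
  have hunstable : 1 < 1 - α * gradCoeff Λ lam i₀ p := by nlinarith
  have hcoord : Tendsto (fun k ↦ (gdStep Λ lam α)^[k] q i₀) atTop (𝓝 0) :=
    h₀ ▸ ((EuclideanSpace.proj i₀ : EuclideanSpace ℝ ι →L[ℝ] ℝ).continuous.tendsto p).comp hlim
  refine eq_zero_or_exists_eq_zero_of_tendsto_zero (fun k ↦ ?_)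
    ((hfactor.eventually (eventually_ge_nhds hunstable)).mono fun k hk ↦ hk.trans (le_abs_self _))
    hcoord
  rw [Function.iterate_succ_apply']
  rfl

theorem volume_setOf_coord_eq_zero_or_exists_eq_zero (hlam : Λ i₀ < 2 * lam) {α : ℝ}
    (hα : 0 ≤ α) :
    volume {q : EuclideanSpace ℝ ι |
      q i₀ = 0 ∨ ∃ k, 1 - α * gradCoeff Λ lam i₀ ((gdStep Λ lam α)^[k] q) = 0} = 0 := by
  classical
  rw [ofPred_or, ofPred_exists]
  refine measure_union_null ?_ (measure_iUnion_null fun k ↦ ?_)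
  · refine AnalyticOnNhd.addHaar_setOf_eq_zero volume
      (fun q _ ↦ (EuclideanSpace.proj i₀ : EuclideanSpace ℝ ι →L[ℝ] ℝ).analyticAt q)
      (a := EuclideanSpace.single i₀ 1) ?_
    simp
  · refine AnalyticOnNhd.addHaar_setOf_eq_zero volume (fun q _ ↦ ?_) (a := 0) ?_
    · have hiter := (analyticOnNhd_gdStep Λ lam α).iterate k q trivial
      exact analyticAt_const.sub
        (analyticAt_const.mul ((analyticOnNhd_gradCoeff Λ lam i₀ _ trivial).comp hiter))
    · simp only [gdStep_iterate_zero, gradCoeff, norm_zero]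
      nlinarith

end GradientDescent

theorem stmt18_general (d : ℕ) (hd : 0 < d) (Λ : Fin d → ℝ)
    (hΛ : StrictMono Λ) (lam : ℝ)
    (ℓ : EuclideanSpace ℝ (Fin d) → ℝ)
    (hℓ : ∀ q : EuclideanSpace ℝ (Fin d),
      ℓ q = ∑ i, Λ i * q i ^ 2 + lam * (‖q‖ ^ 2 - 1) ^ 2)
    (hlam1 : Λ ⟨0, hd⟩ / 2 < lam) :
    ∃ αbar : ℝ, 0 < αbar ∧ ∀ α : ℝ, 0 < α → α < αbar →
      volume {q0 : EuclideanSpace ℝ (Fin d) |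
        ∃ seq : ℕ → EuclideanSpace ℝ (Fin d),
          seq 0 = q0 ∧
          (∀ k : ℕ, seq (k + 1) = seq k - α • gradient ℓ (seq k)) ∧
          ∃ p : EuclideanSpace ℝ (Fin d),
            gradient ℓ p = 0 ∧
            p ≠ Real.sqrt (1 - Λ ⟨0, hd⟩ / (2 * lam)) •
                  EuclideanSpace.single (⟨0, hd⟩ : Fin d) (1 : ℝ) ∧
            p ≠ -(Real.sqrt (1 - Λ ⟨0, hd⟩ / (2 * lam)) •
                  EuclideanSpace.single (⟨0, hd⟩ : Fin d) (1 : ℝ)) ∧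
            Tendsto seq atTop (𝓝 p)} = 0 := by
  obtain rfl : ℓ = loss Λ lam := funext hℓ
  have hmin : ∀ i ≠ ⟨0, hd⟩, Λ ⟨0, hd⟩ < Λ i := fun i hi ↦
    hΛ (Fin.lt_def.2 (Nat.pos_of_ne_zero fun h ↦ hi (Fin.ext h)))
  have hlam : Λ ⟨0, hd⟩ < 2 * lam := by linarith
  refine ⟨1, one_pos, fun α hα _ ↦
    measure_mono_null ?_ (volume_setOf_coord_eq_zero_or_exists_eq_zero hlam hα.le)⟩
  rintro _ ⟨seq, rfl, hstep, p, hcrit, hne, hne', hlim⟩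
  rw [gradient_loss_eq_zero_iff] at hcrit
  have hseq : seq = fun k ↦ (gdStep Λ lam α)^[k] (seq 0) := funext fun k ↦ by
    induction k with
    | zero => rfl
    | succ k ih => rw [hstep, sub_smul_gradient_loss, ih, Function.iterate_succ_apply']
  have h₀ := critical_coord_eq_zero hmin hlam hcrit hne hne'
  exact coord_eq_zero_or_exists_of_tendsto hα h₀ (gradCoeff_neg_of_critical hmin hlam hcrit h₀)
    (hseq ▸ hlim)

/-- If `λ₁ < λ₂ < … < λ_d` and `λ > λ₁/2`, there is `ᾱ > 0` such that for
every step size `α ∈ (0, ᾱ)`, the set of initial points from which gradient descent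
`q^{k+1} = q^k − α∇ℓ(q^k)` converges to a critical point of `ℓ` other than
`±√(1 − λ₁/(2λ)) e₁` (the strict saddle points / local maxima) has Lebesgue measure zero;
equivalently, under any absolutely continuous random initialization, with probability one
gradient descent avoids the bad critical points of `ℓ`. -/
theorem stmt18 (d : ℕ) (hd : 0 < d) (Λ : Fin d → ℝ) (hΛ0 : 0 ≤ Λ ⟨0, hd⟩)
    (hΛ : StrictMono Λ) (lam : ℝ) (hlam : 0 < lam)
    (ℓ : EuclideanSpace ℝ (Fin d) → ℝ)
    (hℓ : ∀ q : EuclideanSpace ℝ (Fin d),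
      ℓ q = ∑ i, Λ i * q i ^ 2 + lam * (‖q‖ ^ 2 - 1) ^ 2)
    (hlam1 : Λ ⟨0, hd⟩ / 2 < lam) :
    ∃ αbar : ℝ, 0 < αbar ∧ ∀ α : ℝ, 0 < α → α < αbar →
      volume {q0 : EuclideanSpace ℝ (Fin d) |
        ∃ seq : ℕ → EuclideanSpace ℝ (Fin d),
          seq 0 = q0 ∧
          (∀ k : ℕ, seq (k + 1) = seq k - α • gradient ℓ (seq k)) ∧
          ∃ p : EuclideanSpace ℝ (Fin d),
            gradient ℓ p = 0 ∧
            p ≠ Real.sqrt (1 - Λ ⟨0, hd⟩ / (2 * lam)) •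
                  EuclideanSpace.single (⟨0, hd⟩ : Fin d) (1 : ℝ) ∧
            p ≠ -(Real.sqrt (1 - Λ ⟨0, hd⟩ / (2 * lam)) •
                  EuclideanSpace.single (⟨0, hd⟩ : Fin d) (1 : ℝ)) ∧
            Tendsto seq atTop (𝓝 p)} = 0 :=
  stmt18_general d hd Λ hΛ lam ℓ hℓ hlam1
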